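/- arXiv:2211.06850 — 7 statements merged into one kernel-verified Lean document; each statement's English description precedes it below -/
import Mathlib

section
/- For any cost c ≥ 0 and any two actions ℓ ≤ î, if R_î − γ_î φ ≥ R_ℓ − γ_ℓ φ for some φ ≥ c/α with α ∈ (0,1], then αR_î − γ_î c ≥ αR_ℓ − γ_ℓ c. Consequently, if î maximizes virtual welfare R_i − γ_i φ̄(c) and φ̄(c) ≥ c/α, then the action chosen under the linear contract with parameter α satisfies i*(αr, c) ≥ î, and hence R_{i*(αr,c)} ≥ R_î. -/
/-! Moving from a lower action `ℓ` to a higher action `i` changes the agent's linear-contract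
utility by `α ΔR - Δγ c = α (ΔR - Δγ φ) + Δγ (α φ - c)`, a sum of two nonnegative terms when
`ΔR ≥ Δγ φ` and `c ≤ α φ`. Hence no action below a virtual-welfare maximizer `î` can beat it
under the linear contract, and the largest linear-contract maximizer lies at or above `î`. -/

theorem linear_welfare_le_of_virtual_welfare_le {ι : Type*} [Preorder ι] {γ R : ι → ℝ}
    (hγ : Monotone γ) {α c φ : ℝ} (hα : 0 < α) (hφ : c / α ≤ φ) {ℓ i : ι} (hℓi : ℓ ≤ i)
    (h : R ℓ - γ ℓ * φ ≤ R i - γ i * φ) :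
    α * R ℓ - γ ℓ * c ≤ α * R i - γ i * c := by
  have hcα : c ≤ α * φ := by rwa [div_le_iff₀' hα] at hφ
  have hΔγ : 0 ≤ γ i - γ ℓ := sub_nonneg.2 (hγ hℓi)
  nlinarith [mul_le_mul_of_nonneg_left hcα hΔγ, mul_le_mul_of_nonneg_left h hα.le]

theorem le_greatest_maximizer {ι β : Type*} [LinearOrder ι] [Preorder β] {u v : ι → β}
    (huv : ∀ ℓ i, ℓ ≤ i → v ℓ ≤ v i → u ℓ ≤ u i) {ihat istar : ι}
    (hihat : ∀ j, v j ≤ v ihat) (hmax : ∀ j, u j ≤ u istar)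
    (htie : ∀ j, (∀ k, u k ≤ u j) → j ≤ istar) :
    ihat ≤ istar := by
  rcases le_total istar ihat with h | h
  · exact htie ihat fun k => (hmax k).trans (huv istar ihat h (hihat istar))
  · exact h

theorem linear_choice_dominates_virtual_choice_general
    (n : ℕ) (γ R : Fin (n + 1) → ℝ)
    (hγ : StrictMono γ) (hR : StrictMono R)
    (α c : ℝ) (hα0 : 0 < α)
    (φbarc : ℝ) (hφbarc : c / α ≤ φbarc)
    (ihat : Fin (n + 1))
    (hihat : ∀ j, R j - γ j * φbarc ≤ R ihat - γ ihat * φbarc)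
    (istar : Fin (n + 1))
    (hmax : ∀ j, α * R j - γ j * c ≤ α * R istar - γ istar * c)
    (htie : ∀ j, (∀ k, α * R k - γ k * c ≤ α * R j - γ j * c) → j ≤ istar) :
    (∀ (ℓ i' : Fin (n + 1)) (φ : ℝ), ℓ ≤ i' → c / α ≤ φ →
        R ℓ - γ ℓ * φ ≤ R i' - γ i' * φ →
        α * R ℓ - γ ℓ * c ≤ α * R i' - γ i' * c) ∧
      ihat ≤ istar ∧ R ihat ≤ R istar := by
  have hlinear : ∀ (ℓ i' : Fin (n + 1)) (φ : ℝ), ℓ ≤ i' → c / α ≤ φ →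
      R ℓ - γ ℓ * φ ≤ R i' - γ i' * φ → α * R ℓ - γ ℓ * c ≤ α * R i' - γ i' * c :=
    fun _ _ _ hℓi hφ h => linear_welfare_le_of_virtual_welfare_le hγ.monotone hα0 hφ hℓi h
  have hle : ihat ≤ istar :=
    le_greatest_maximizer (fun ℓ i hℓi => hlinear ℓ i φbarc hℓi hφbarc) hihat hmax htie
  exact ⟨hlinear, hle, hR.monotone hle⟩

/-- If `ℓ ≤ î` and `R_î - γ_î φ ≥ R_ℓ - γ_ℓ φ` for some `φ ≥ c/α`,
then `α R_î - γ_î c ≥ α R_ℓ - γ_ℓ c`.  Consequently, if `î` maximizes the virtual welfare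
`R_i - γ_i φ̄(c)` and `φ̄(c) ≥ c/α`, then the (largest, tie-breaking in favor of the
principal) action `i*(αr, c)` chosen under the linear contract satisfies
`i*(αr,c) ≥ î` and hence `R_{i*(αr,c)} ≥ R_î`. -/
theorem linear_choice_dominates_virtual_choice
    (n : ℕ) (γ R : Fin (n + 1) → ℝ)
    (hγ0 : γ 0 = 0) (hγ : StrictMono γ) (hR : StrictMono R)
    (α c : ℝ) (hα0 : 0 < α) (hα1 : α ≤ 1) (hc : 0 ≤ c)
    (φbarc : ℝ) (hφbarc : c / α ≤ φbarc)
    (ihat : Fin (n + 1))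
    (hihat : ∀ j, R j - γ j * φbarc ≤ R ihat - γ ihat * φbarc)
    (istar : Fin (n + 1))
    (hmax : ∀ j, α * R j - γ j * c ≤ α * R istar - γ istar * c)
    (htie : ∀ j, (∀ k, α * R k - γ k * c ≤ α * R j - γ j * c) → j ≤ istar) :
    (∀ (ℓ i' : Fin (n + 1)) (φ : ℝ), ℓ ≤ i' → c / α ≤ φ →
        R ℓ - γ ℓ * φ ≤ R i' - γ i' * φ →
        α * R ℓ - γ ℓ * c ≤ α * R i' - γ i' * c) ∧
      ihat ≤ istar ∧ R ihat ≤ R istar :=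
  linear_choice_dominates_virtual_choice_general n γ R hγ hR α c hα0 φbarc hφbarc ihat hihat istar
    hmax htie
end

section
/- Fix α, β, η ∈ (0,1]. Consider a principal-agent instance with type distribution G supported on [c̲, c̄]. If there exists κ ∈ [c̲/α, c̄] such that G(αc) ≥ β·G(c) for all c ≥ κ (slowly-increasing condition), and the welfare from types in [κ, c̄] is at least η times the total optimal welfare (small-tail condition), then the expected revenue of the linear contract with parameter α is at least (1−α)·β·η times the optimal expected welfare Wel = E_{c∼G}[max_i (R_i − γ_i c)]. -/
/-!
A type-`c` agent facing the linear contract `α` acts like a type-`c / α` agent facing the full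
contract, so the revenue is at least `1 - α` times the expected welfare `W (c / α)`, where
`W c = maxᵢ (Rᵢ - γᵢ c)`. The rescaled type `c / α` has distribution function `G (α ·)`, which by
the slowly-increasing condition dominates `β` times the distribution function of the types
in `[κ, c̄]`. As `W` is Lipschitz, nonnegative and antitone, integrating by parts against `W`
turns this first-order stochastic dominance into `E[W (c / α)] ≥ β · Wel_{[κ, c̄]}`, and the
small-tail condition concludes.
-/

open MeasureTheory Set intervalIntegral

theorem integral_mul_eq_primitive_mul_sub_integral_primitive_mul_deriv {p W : ℝ → ℝ} {l b : ℝ}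
    (hp : IntervalIntegrable p volume l b) (hW : AbsolutelyContinuousOnInterval W l b) :
    ∫ x in l..b, p x * W x
      = (∫ x in l..b, p x) * W b - ∫ x in l..b, (∫ t in l..x, p t) * deriv W x := by
  have hP := hp.absolutelyContinuousOnInterval_intervalIntegral (c := l) left_mem_uIcc
  have hderiv : ∫ x in l..b, deriv (fun y => ∫ t in l..y, p t) x * W x
      = ∫ x in l..b, p x * W x := by
    refine integral_congr_ae ?_
    filter_upwards [hp.ae_hasDerivAt_integral] with x hx hxI
    rw [(hx (uIoc_subset_uIcc hxI) l left_mem_uIcc).deriv]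
  have := hP.integral_mul_deriv_eq_deriv_mul hW
  rw [hderiv, integral_same, zero_mul, sub_zero] at this
  linarith

theorem integral_mul_antitone_le_of_primitive_le {p q W : ℝ → ℝ} {a l b : ℝ}
    (hal : a ≤ l) (hlb : l ≤ b)
    (hp : IntervalIntegrable p volume a b) (hq : IntervalIntegrable q volume l b)
    (hp_nonneg : ∀ x ∈ Icc a l, 0 ≤ p x)
    (hqp : ∀ s ∈ Icc l b, ∫ x in l..s, q x ≤ ∫ x in a..s, p x)
    (hW : AbsolutelyContinuousOnInterval W a b) (hW_anti : Antitone W) (hWb : 0 ≤ W b) :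
    ∫ x in l..b, q x * W x ≤ ∫ x in a..b, p x * W x := by
  have hl : l ∈ uIcc a b := by rw [uIcc_of_le (hal.trans hlb)]; exact ⟨hal, hlb⟩
  rw [integral_mul_eq_primitive_mul_sub_integral_primitive_mul_deriv hq
      (hW.mono (uIcc_subset_uIcc hl right_mem_uIcc)),
    integral_mul_eq_primitive_mul_sub_integral_primitive_mul_deriv hp hW]
  set P := fun x => ∫ t in a..x, p t
  have hPW : IntervalIntegrable (fun x => P x * deriv W x) volume a b :=
    hW.intervalIntegrable_deriv.continuousOn_mul
      (hp.absolutelyContinuousOnInterval_intervalIntegral left_mem_uIcc).continuousOn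
  have hhead : ∫ x in a..l, P x * deriv W x ≤ 0 := by
    have := integral_nonneg (f := fun x => -(P x * deriv W x)) (μ := volume) hal fun x hx =>
      neg_nonneg.2 <| mul_nonpos_of_nonneg_of_nonpos
        (integral_nonneg hx.1 fun t ht => hp_nonneg t ⟨ht.1, ht.2.trans hx.2⟩)
        hW_anti.deriv_nonpos
    rwa [intervalIntegral.integral_neg, neg_nonneg] at this
  have htail : ∫ x in l..b, P x * deriv W x ≤ ∫ x in l..b, (∫ t in l..x, q t) * deriv W x :=
    integral_mono_on hlb (hPW.mono_set (uIcc_subset_uIcc hl right_mem_uIcc))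
      ((hW.mono (uIcc_subset_uIcc hl right_mem_uIcc)).intervalIntegrable_deriv.continuousOn_mul
        (hq.absolutelyContinuousOnInterval_intervalIntegral left_mem_uIcc).continuousOn)
      fun x hx => mul_le_mul_of_nonpos_right (hqp x hx) hW_anti.deriv_nonpos
  rw [← integral_add_adjacent_intervals (hPW.mono_set (uIcc_subset_uIcc left_mem_uIcc hl))
    (hPW.mono_set (uIcc_subset_uIcc hl right_mem_uIcc))]
  nlinarith [mul_le_mul_of_nonneg_right (hqp b ⟨hlb, le_rfl⟩) hWb]

theorem integral_tail_le_integral_comp_div_of_slowly_increasing {g G W : ℝ → ℝ}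
    {cl cu α β κ : ℝ} (hcl : 0 ≤ cl) (hα0 : 0 < α) (hα1 : α ≤ 1) (hβ : 0 ≤ β)
    (hg : ∀ c, 0 ≤ g c) (hgi : ∀ a b, IntervalIntegrable g volume a b)
    (hG : ∀ c, G c = ∫ x in cl..c, g x) (hκl : cl / α ≤ κ) (hκu : κ ≤ cu)
    (hslow : ∀ c, κ ≤ c → β * G c ≤ G (α * c))
    (hW : AbsolutelyContinuousOnInterval W (cl / α) (cu / α)) (hW_anti : Antitone W)
    (hW_nonneg : ∀ x, 0 ≤ W x) :
    β * ∫ c in κ..cu, g c * W c ≤ ∫ c in cl..cu, g c * W (c / α) := by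
  have hcl_le : cl ≤ cl / α := (le_div_iff₀ hα0).2 (mul_le_of_le_one_right hcl hα1)
  have hcu_le : cu ≤ cu / α :=
    (le_div_iff₀ hα0).2 (mul_le_of_le_one_right (hcl.trans (hcl_le.trans (hκl.trans hκu))) hα1)
  have hκb : κ ≤ cu / α := hκu.trans hcu_le
  have hGκ : 0 ≤ G κ := hG κ ▸ integral_nonneg (hcl_le.trans hκl) fun x _ => hg x
  have hP : ∀ s, ∫ x in cl / α..s, α * g (α * x) = G (α * s) := fun s => by
    rw [intervalIntegral.integral_const_mul, ← smul_eq_mul, smul_integral_comp_mul_left,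
      mul_div_cancel₀ _ hα0.ne', hG]
  have hQ : ∀ s, ∫ x in κ..s, β * g x = β * (G s - G κ) := fun s => by
    rw [intervalIntegral.integral_const_mul, hG, hG,
      integral_interval_sub_left (hgi _ _) (hgi _ _)]
  have hcomp : ∫ x in cl / α..cu / α, α * g (α * x) * W x
      = ∫ c in cl..cu, g c * W (c / α) := by
    have := smul_integral_comp_mul_left (a := cl / α) (b := cu / α) (fun c => g c * W (c / α)) α
    simp only [smul_eq_mul, mul_div_cancel₀ _ hα0.ne', mul_div_cancel_left₀ _ hα0.ne'] at this
    rw [← this, ← intervalIntegral.integral_const_mul]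
    simp only [mul_assoc]
  have hdom := integral_mul_antitone_le_of_primitive_le (p := fun x => α * g (α * x))
    (q := fun x => β * g x) hκl hκb (((hgi cl cu).comp_mul_left).const_mul α)
    ((hgi κ (cu / α)).const_mul β) (fun x _ => mul_nonneg hα0.le (hg _))
    (fun s hs => by
      rw [hP, hQ]
      nlinarith [hslow s hs.1]) hW hW_anti (hW_nonneg _)
  have hWc : ContinuousOn W (uIcc κ (cu / α)) := hW.continuousOn.mono
    (uIcc_subset_uIcc (by rw [uIcc_of_le (hκl.trans hκb)]; exact ⟨hκl, hκb⟩) right_mem_uIcc)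
  calc β * ∫ c in κ..cu, g c * W c
      ≤ β * ∫ c in κ..cu / α, g c * W c := by
        gcongr
        exact integral_mono_interval le_rfl hκu hcu_le
          (ae_of_all _ fun x => mul_nonneg (hg x) (hW_nonneg x)) ((hgi _ _).mul_continuousOn hWc)
    _ = ∫ c in κ..cu / α, β * g c * W c := by
        rw [← intervalIntegral.integral_const_mul]
        simp only [mul_assoc]
    _ ≤ _ := hdom
    _ = _ := hcomp

section Welfare

variable {ι : Type*} [Fintype ι] [Nonempty ι] (γ R : ι → ℝ)

noncomputable def welfare (c : ℝ) : ℝ :=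
  Finset.univ.sup' Finset.univ_nonempty fun j => R j - γ j * c

variable {γ R}

theorem le_welfare (j : ι) (c : ℝ) : R j - γ j * c ≤ welfare γ R c :=
  Finset.le_sup' (fun j => R j - γ j * c) (Finset.mem_univ j)

theorem welfare_eq_of_forall_le {i : ι} {c : ℝ} (h : ∀ j, R j - γ j * c ≤ R i - γ i * c) :
    welfare γ R c = R i - γ i * c :=
  le_antisymm (Finset.sup'_le _ _ fun j _ => h j) (le_welfare i c)

theorem antitone_welfare (hγ : ∀ j, 0 ≤ γ j) : Antitone (welfare γ R) := fun _ _ hxy =>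
  Finset.sup'_le _ _ fun j _ =>
    (sub_le_sub_left (mul_le_mul_of_nonneg_left hxy (hγ j)) _).trans (le_welfare j _)

theorem lipschitzWith_welfare : LipschitzWith (∑ j, |γ j|).toNNReal (welfare γ R) := by
  refine LipschitzWith.of_le_add_mul' _ fun x y => Finset.sup'_le _ _ fun j _ => ?_
  have hγj : γ j * (y - x) ≤ (∑ j, |γ j|) * dist x y :=
    calc γ j * (y - x) ≤ |γ j| * |x - y| := by
          rw [← abs_sub_comm, ← abs_mul]; exact le_abs_self _
      _ ≤ _ := mul_le_mul_of_nonneg_right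
          (Finset.single_le_sum (fun j _ => abs_nonneg (γ j)) (Finset.mem_univ j)) (abs_nonneg _)
  linarith [le_welfare (γ := γ) (R := R) j y]

theorem welfare_div_le_of_isMax {α c : ℝ} (hα : 0 < α) (hc : 0 ≤ c) (hγ : ∀ j, 0 ≤ γ j) {i : ι}
    (hi : ∀ j, α * R j - γ j * c ≤ α * R i - γ i * c) : welfare γ R (c / α) ≤ R i := by
  refine Finset.sup'_le _ _ fun j _ => le_of_mul_le_mul_left ?_ hα
  have : α * (R j - γ j * (c / α)) = α * R j - γ j * c := by field_simp
  nlinarith [hi j, mul_nonneg (hγ i) hc]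

theorem integral_welfare_div_le_integral_reward {g : ℝ → ℝ} {cl cu α : ℝ} (hcl : 0 ≤ cl)
    (hclu : cl ≤ cu) (hα : 0 < α) (hγ : ∀ j, 0 ≤ γ j) (hg : ∀ c, 0 ≤ g c)
    (hgi : IntervalIntegrable g volume cl cu) {i : ℝ → ι}
    (hi : ∀ c j, α * R j - γ j * c ≤ α * R (i c) - γ (i c) * c)
    (hRi : Measurable fun c => R (i c)) :
    ∫ c in cl..cu, g c * welfare γ R (c / α) ≤ ∫ c in cl..cu, g c * R (i c) := by
  have hW_cont : Continuous fun c => welfare γ R (c / α) :=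
    lipschitzWith_welfare.continuous.comp (continuous_id.div_const α)
  have hgR : IntervalIntegrable (fun c => g c * R (i c)) volume cl cu := by
    rw [intervalIntegrable_iff_integrableOn_Ioc_of_le hclu] at hgi ⊢
    exact hgi.mul_bdd hRi.aestronglyMeasurable (ae_of_all _ fun c =>
      Finset.single_le_sum (f := fun j => ‖R j‖) (fun j _ => norm_nonneg _) (Finset.mem_univ _))
  exact integral_mono_on hclu (hgi.mul_continuousOn hW_cont.continuousOn) hgR
    fun c hc => mul_le_mul_of_nonneg_left
      (welfare_div_le_of_isMax hα (hcl.trans hc.1) hγ (hi c)) (hg c)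

end Welfare

theorem measurable_comp_of_measurable_val {X Y : Type*} [MeasurableSpace X] [MeasurableSpace Y]
    {n : ℕ} (f : Fin (n + 1) → Y) {i : X → Fin (n + 1)} (hi : Measurable fun x => (i x : ℕ)) :
    Measurable fun x => f (i x) := by
  have : (fun x => f (i x)) = (fun k : ℕ => f (Fin.ofNat (n + 1) k)) ∘ fun x => (i x : ℕ) := by
    funext x; simp
  rw [this]
  exact measurable_from_nat.comp hi

theorem linear_contract_approx_slowly_increasing_general
    (n : ℕ) (γ R : Fin (n + 1) → ℝ)
    (hγ0 : γ 0 = 0) (hγ : StrictMono γ) (hR0 : R 0 = 0)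
    (cl cu : ℝ) (hcl : 0 ≤ cl)
    (g G : ℝ → ℝ) (hg : ∀ c, 0 ≤ g c)
    (hgi : ∀ a b : ℝ, IntervalIntegrable g volume a b)
    (hG : ∀ c, G c = ∫ x in cl..c, g x)
    (α β η : ℝ) (hα0 : 0 < α) (hα1 : α ≤ 1) (hβ0 : 0 < β)
    (κ : ℝ) (hκl : cl / α ≤ κ) (hκu : κ ≤ cu)
    -- slowly-increasing condition: G(αc) ≥ β G(c) for all c ≥ κ
    (hslow : ∀ c, κ ≤ c → β * G c ≤ G (α * c))
    -- agent's choice: istar t c maximizes t·R_i - γ_i c (t = 1 gives welfare maximizer)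
    (istar : ℝ → ℝ → Fin (n + 1))
    (histar : ∀ t c j, t * R j - γ j * c ≤ t * R (istar t c) - γ (istar t c) * c)
    (hmeas : ∀ t, Measurable fun c => (istar t c : ℕ))
    -- small-tail condition: welfare from types in [κ, cu] is at least η times total welfare
    (hsmall : η * (∫ c in cl..cu, g c * (R (istar 1 c) - γ (istar 1 c) * c))
        ≤ ∫ c in κ..cu, g c * (R (istar 1 c) - γ (istar 1 c) * c)) :
    (1 - α) * β * η * (∫ c in cl..cu, g c * (R (istar 1 c) - γ (istar 1 c) * c))
      ≤ ∫ c in cl..cu, g c * ((1 - α) * R (istar α c)) := by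
  have hγ_nonneg : ∀ j, 0 ≤ γ j := fun j => hγ0 ▸ hγ.monotone (Fin.zero_le j)
  have hwelfare : ∀ c, R (istar 1 c) - γ (istar 1 c) * c = welfare γ R c := fun c =>
    (welfare_eq_of_forall_le fun j => by simpa using histar 1 c j).symm
  have hwelfare_nonneg : ∀ c, 0 ≤ welfare γ R c := fun c => by
    simpa [hR0, hγ0] using le_welfare (γ := γ) (R := R) 0 c
  have hclu : cl ≤ cu :=
    ((le_div_iff₀ hα0).2 (mul_le_of_le_one_right hcl hα1)).trans (hκl.trans hκu)
  have htail := integral_tail_le_integral_comp_div_of_slowly_increasing hcl hα0 hα1 hβ0.le hg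
    hgi hG hκl hκu hslow lipschitzWith_welfare.lipschitzOnWith.absolutelyContinuousOnInterval
    (antitone_welfare hγ_nonneg) hwelfare_nonneg
  have hrevenue := integral_welfare_div_le_integral_reward hcl hclu hα0 hγ_nonneg hg (hgi cl cu)
    (histar α) (measurable_comp_of_measurable_val R (hmeas α))
  simp only [hwelfare] at hsmall ⊢
  simp only [mul_left_comm (g _), intervalIntegral.integral_const_mul]
  have h1α : 0 ≤ 1 - α := sub_nonneg.2 hα1
  calc (1 - α) * β * η * ∫ c in cl..cu, g c * welfare γ R c
      = (1 - α) * (β * (η * ∫ c in cl..cu, g c * welfare γ R c)) := by ring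
    _ ≤ (1 - α) * (β * ∫ c in κ..cu, g c * welfare γ R c) := by gcongr
    _ ≤ (1 - α) * ∫ c in cl..cu, g c * R (istar α c) := by gcongr; exact htail.trans hrevenue

/-- Theorem: slowly-increasing distributions: if the type distribution `G`
is `(α, β, κ)`-slowly-increasing and the instance satisfies the `(κ, η)`-small-tail
condition for welfare, then the linear contract with parameter `α` earns expected
revenue at least `(1-α)·β·η` times the optimal expected welfare. -/
theorem linear_contract_approx_slowly_increasing
    (n : ℕ) (γ R : Fin (n + 1) → ℝ)
    (hγ0 : γ 0 = 0) (hγ : StrictMono γ) (hR0 : R 0 = 0) (hR : StrictMono R)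
    (cl cu : ℝ) (hcl : 0 ≤ cl) (hclu : cl < cu)
    (g G : ℝ → ℝ) (hg : ∀ c, 0 ≤ g c)
    (hgi : ∀ a b : ℝ, IntervalIntegrable g volume a b)
    (hG : ∀ c, G c = ∫ x in cl..c, g x) (hG1 : G cu = 1)
    (α β η : ℝ) (hα0 : 0 < α) (hα1 : α ≤ 1) (hβ0 : 0 < β) (hβ1 : β ≤ 1)
    (hη0 : 0 < η) (hη1 : η ≤ 1)
    (κ : ℝ) (hκl : cl / α ≤ κ) (hκu : κ ≤ cu)
    -- slowly-increasing condition: G(αc) ≥ β G(c) for all c ≥ κ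
    (hslow : ∀ c, κ ≤ c → β * G c ≤ G (α * c))
    -- agent's choice: istar t c maximizes t·R_i - γ_i c (t = 1 gives welfare maximizer)
    (istar : ℝ → ℝ → Fin (n + 1))
    (histar : ∀ t c j, t * R j - γ j * c ≤ t * R (istar t c) - γ (istar t c) * c)
    (hmeas : ∀ t, Measurable fun c => (istar t c : ℕ))
    -- small-tail condition: welfare from types in [κ, cu] is at least η times total welfare
    (hsmall : η * (∫ c in cl..cu, g c * (R (istar 1 c) - γ (istar 1 c) * c))
        ≤ ∫ c in κ..cu, g c * (R (istar 1 c) - γ (istar 1 c) * c)) :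
    (1 - α) * β * η * (∫ c in cl..cu, g c * (R (istar 1 c) - γ (istar 1 c) * c))
      ≤ ∫ c in cl..cu, g c * ((1 - α) * R (istar α c)) :=
  linear_contract_approx_slowly_increasing_general n γ R hγ0 hγ hR0 cl cu hcl g G hg hgi hG α β η
    hα0 hα1 hβ0 κ hκl hκu hslow istar histar hmeas hsmall
end

section
/- Let q, α, η ∈ (0,1) and let c_q be the q-th quantile of the type distribution G (i.e., G(c_q) = q). If the instance satisfies the (c_q/α, η)-small-tail assumption (the welfare from types in [c_q/α, c̄] is at least η times the total optimal welfare), then the linear contract with parameter α achieves expected revenue at least (1−α)·η·q times the optimal expected welfare. -/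
/-!
Let `W c = max_j (R_j - γ_j c)` be the optimal welfare of type `c`: it is nonnegative and
antitone. Under the linear contract `α`, type `c` still takes an action whose reward is at least
`W (c / α)`, so after substituting `c = α u` the revenue is at least `(1 - α) ∫ W dμ`, where `μ`
has density `α g (α u)` on `[c̲ / α, c̄]`. Since `c_q` is the `q`-quantile, the distribution
function of `μ` dominates that of `q g` on `[c_q / α, c̄]` (the slowly-increasing property
`G (α c) ≥ G (c_q) = q ≥ q G c` for `c ≥ c_q / α`), and by the layer-cake formula this first-order
stochastic dominance carries over to integrals of the antitone `W`. The small-tail assumption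
then bounds `∫_{c_q/α}^{c̄} W g` below by `η` times the optimal welfare.
-/

open MeasureTheory Set Filter Topology

theorem IsLowerSet.measure_le_of_measure_Iic_le {μ ν : Measure ℝ} [NullSingletonClass ν]
    (h : ∀ x, μ (Iic x) ≤ ν (Iic x)) {D : Set ℝ} (hD : IsLowerSet D) : μ D ≤ ν D := by
  by_cases hbdd : BddAbove D
  · rcases D.eq_empty_or_nonempty with rfl | hne
    · simp
    · calc μ D ≤ μ (Iic (sSup D)) := measure_mono fun y hy => le_csSup hbdd hy
        _ ≤ ν (Iio (sSup D)) := (h _).trans_eq (measure_congr Iio_ae_eq_Iic).symm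
        _ ≤ ν D := measure_mono fun y hy => by
          obtain ⟨z, hzD, hyz⟩ := exists_lt_of_lt_csSup hne hy
          exact hD hyz.le hzD
  · obtain rfl : D = univ := eq_univ_of_forall fun y => by
      obtain ⟨z, hzD, hyz⟩ := not_bddAbove_iff.1 hbdd y
      exact hD hyz.le hzD
    exact le_of_tendsto' (tendsto_measure_Iic_atTop μ) fun x =>
      (h x).trans (measure_mono (subset_univ _))

theorem lintegral_antitone_le_of_measure_Iic_le {μ ν : Measure ℝ} [NullSingletonClass ν]
    (h : ∀ x, μ (Iic x) ≤ ν (Iic x)) {W : ℝ → ℝ} (hW : Antitone W) (hW0 : 0 ≤ W) :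
    ∫⁻ u, ENNReal.ofReal (W u) ∂μ ≤ ∫⁻ u, ENNReal.ofReal (W u) ∂ν := by
  rw [lintegral_eq_lintegral_meas_lt μ (ae_of_all _ hW0) hW.measurable.aemeasurable,
    lintegral_eq_lintegral_meas_lt ν (ae_of_all _ hW0) hW.measurable.aemeasurable]
  exact lintegral_mono fun t => IsLowerSet.measure_le_of_measure_Iic_le h
    fun x y hyx hx => lt_of_lt_of_le hx (hW hyx)

theorem Antitone.intervalIntegrable_mul {f W : ℝ → ℝ} {a b : ℝ}
    (hf : IntervalIntegrable f volume a b) (hW : Antitone W) :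
    IntervalIntegrable (fun u => f u * W u) volume a b := by
  rw [intervalIntegrable_iff] at hf ⊢
  refine hf.mul_bdd (c := max |W (max a b)| |W (min a b)|)
    hW.measurable.aestronglyMeasurable ?_
  refine (ae_restrict_iff' measurableSet_uIoc).2 (ae_of_all _ fun u hu => ?_)
  exact abs_le_max_abs_abs (hW (uIoc_subset_uIcc hu).2) (hW (uIoc_subset_uIcc hu).1)

theorem withDensity_restrict_Ioc_Iic {f : ℝ → ℝ} {a b : ℝ} (hab : a ≤ b)
    (hf : IntervalIntegrable f volume a b) (hf0 : ∀ u ∈ Ioc a b, 0 ≤ f u) (x : ℝ) :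
    (volume.restrict (Ioc a b)).withDensity (fun u => ENNReal.ofReal (f u)) (Iic x)
      = ENNReal.ofReal (∫ u in a..projIcc a b hab x, f u) := by
  have hx := (projIcc a b hab x).2
  have hset : Iic x ∩ Ioc a b = Ioc a (projIcc a b hab x) := by
    rw [inter_comm, Ioc_inter_Iic, coe_projIcc]
    rcases le_total a (min b x) with h | h
    · rw [max_eq_right h]
    · rw [max_eq_left h, Ioc_self, Ioc_eq_empty h.not_gt]
  rw [withDensity_apply _ measurableSet_Iic, Measure.restrict_restrict measurableSet_Iic, hset,
    intervalIntegral.integral_of_le hx.1, ofReal_integral_eq_lintegral_ofReal]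
  · exact hf.1.mono_set (Ioc_subset_Ioc_right hx.2)
  · exact (ae_restrict_iff' measurableSet_Ioc).2 (ae_of_all _ fun u hu =>
      hf0 u (Ioc_subset_Ioc_right hx.2 hu))

theorem ofReal_intervalIntegral_mul_eq_lintegral_withDensity {f W : ℝ → ℝ} {a b : ℝ}
    (hab : a ≤ b) (hf : IntervalIntegrable f volume a b) (hf0 : ∀ u ∈ Ioc a b, 0 ≤ f u)
    (hW : Antitone W) (hW0 : 0 ≤ W) :
    ENNReal.ofReal (∫ u in a..b, f u * W u)
      = ∫⁻ u, ENNReal.ofReal (W u)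
          ∂(volume.restrict (Ioc a b)).withDensity (fun u => ENNReal.ofReal (f u)) := by
  rw [lintegral_withDensity_eq_lintegral_mul_non_measurable₀ _
      hf.1.aemeasurable.ennreal_ofReal (ae_of_all _ fun _ => ENNReal.ofReal_lt_top),
    intervalIntegral.integral_of_le hab,
    ofReal_integral_eq_lintegral_ofReal ((hW.intervalIntegrable_mul hf).1)]
  · exact setLIntegral_congr_fun measurableSet_Ioc fun u hu => ENNReal.ofReal_mul (hf0 u hu)
  · exact (ae_restrict_iff' measurableSet_Ioc).2 (ae_of_all _ fun u hu =>
      mul_nonneg (hf0 u hu) (hW0 u))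

theorem intervalIntegral_mul_antitone_le_of_primitive_le {f₁ f₂ W : ℝ → ℝ} {a a' b : ℝ}
    (ha : a ≤ a') (hb : a' ≤ b)
    (hf₁ : IntervalIntegrable f₁ volume a b) (hf₂ : IntervalIntegrable f₂ volume a' b)
    (hf₁0 : ∀ u ∈ Ioc a b, 0 ≤ f₁ u) (hf₂0 : ∀ u ∈ Ioc a' b, 0 ≤ f₂ u)
    (hW : Antitone W) (hW0 : 0 ≤ W)
    (hdom : ∀ t ∈ Icc a' b, ∫ u in a'..t, f₂ u ≤ ∫ u in a..t, f₁ u) :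
    ∫ u in a'..b, f₂ u * W u ≤ ∫ u in a..b, f₁ u * W u := by
  have hab := ha.trans hb
  have hI₁ : 0 ≤ ∫ u in a..b, f₁ u * W u := by
    rw [intervalIntegral.integral_of_le hab]
    exact setIntegral_nonneg measurableSet_Ioc fun u hu => mul_nonneg (hf₁0 u hu) (hW0 u)
  rw [← ENNReal.ofReal_le_ofReal_iff hI₁,
    ofReal_intervalIntegral_mul_eq_lintegral_withDensity hb hf₂ hf₂0 hW hW0,
    ofReal_intervalIntegral_mul_eq_lintegral_withDensity hab hf₁ hf₁0 hW hW0]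
  refine lintegral_antitone_le_of_measure_Iic_le (fun x => ?_) hW hW0
  rw [withDensity_restrict_Ioc_Iic hb hf₂ hf₂0, withDensity_restrict_Ioc_Iic hab hf₁ hf₁0]
  rcases lt_or_ge x a' with hx | hx
  · simp [projIcc_of_le_left hb hx.le]
  · have hproj : (projIcc a b hab x : ℝ) = projIcc a' b hb x := by
      simp only [coe_projIcc]
      rw [max_eq_right (ha.trans (le_min hb hx)), max_eq_right (le_min hb hx)]
    rw [hproj]
    exact ENNReal.ofReal_le_ofReal (hdom _ (projIcc a' b hb x).2)

theorem integral_comp_mul_le_integral_comp_div {g W : ℝ → ℝ} {a b α : ℝ} (hα0 : 0 < α)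
    (hα1 : α ≤ 1) (hb : 0 ≤ b) (hab : a / α ≤ b) (hg : ∀ c, 0 ≤ g c)
    (hgi : IntervalIntegrable g volume a b) (hW : Antitone W) (hW0 : 0 ≤ W) :
    ∫ u in a / α..b, α * g (α * u) * W u ≤ ∫ c in a..b, g c * W (c / α) := by
  have hsubst := intervalIntegral.integral_comp_div (fun u => g (α * u) * W u) hα0.ne'
    (a := a) (b := b)
  simp only [mul_div_cancel₀ _ hα0.ne', smul_eq_mul] at hsubst
  simp only [hsubst, mul_assoc, intervalIntegral.integral_const_mul]
  gcongr
  exact intervalIntegral.integral_mono_interval le_rfl hab (le_div_self hb hα0 hα1)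
    (ae_of_all _ fun u => mul_nonneg (hg _) (hW0 u))
    (hW.intervalIntegrable_mul (hgi.comp_mul_left (c := α)))

theorem Fin.measurable_of_measurable_val {α : Type*} [MeasurableSpace α] {n : ℕ}
    {i : α → Fin n} (hi : Measurable fun c => (i c : ℕ)) : Measurable i :=
  measurable_to_countable' fun k => by
    convert hi (measurableSet_singleton (k : ℕ)) using 1
    ext c
    simp [Fin.ext_iff]

theorem IntervalIntegrable.mul_comp_of_finite {ι : Type*} [Finite ι] [MeasurableSpace ι]
    [DiscreteMeasurableSpace ι] {f : ℝ → ℝ} {a b : ℝ} (hf : IntervalIntegrable f volume a b)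
    (v : ι → ℝ) {i : ℝ → ι} (hi : Measurable i) :
    IntervalIntegrable (fun c => f c * v (i c)) volume a b := by
  obtain ⟨C, hC⟩ := Finite.exists_le fun j => ‖v j‖
  rw [intervalIntegrable_iff] at hf ⊢
  exact hf.mul_bdd (Measurable.of_discrete.comp hi).aestronglyMeasurable
    (ae_of_all _ fun c => hC (i c))

section Welfare

variable {ι : Type*} {γ R : ι → ℝ}

theorem antitone_optimal_welfare (hγ : ∀ j, 0 ≤ γ j) {i : ℝ → ι}
    (hi : ∀ c j, R j - γ j * c ≤ R (i c) - γ (i c) * c) :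
    Antitone fun c => R (i c) - γ (i c) * c := fun u v huv =>
  (sub_le_sub_left (mul_le_mul_of_nonneg_left huv (hγ _)) _).trans (hi u (i v))

theorem welfare_div_le_reward {t c : ℝ} {i : ι} (ht : 0 < t) (hc : 0 ≤ c) (hγi : 0 ≤ γ i)
    (hi : ∀ j, t * R j - γ j * c ≤ t * R i - γ i * c) (j : ι) :
    R j - γ j * (c / t) ≤ R i := by
  refine le_of_mul_le_mul_left ?_ ht
  calc t * (R j - γ j * (c / t)) = t * R j - γ j * c := by field_simp
    _ ≤ t * R i - γ i * c := hi j
    _ ≤ t * R i := sub_le_self _ (mul_nonneg hγi hc)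

end Welfare

section Quantile

variable {g G : ℝ → ℝ} {cl : ℝ}

theorem integral_eq_sub_of_primitive (hgi : ∀ a b, IntervalIntegrable g volume a b)
    (hG : ∀ c, G c = ∫ x in cl..c, g x) (x y : ℝ) : ∫ u in x..y, g u = G y - G x := by
  rw [hG, hG, intervalIntegral.integral_interval_sub_left (hgi _ _) (hgi _ _)]

theorem monotone_of_primitive (hg : ∀ c, 0 ≤ g c) (hgi : ∀ a b, IntervalIntegrable g volume a b)
    (hG : ∀ c, G c = ∫ x in cl..c, g x) : Monotone G := fun x y hxy =>
  sub_nonneg.1 <| integral_eq_sub_of_primitive hgi hG x y ▸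
    intervalIntegral.integral_nonneg hxy fun u _ => hg u

variable {cu q α cq : ℝ}

theorem integral_quantile_tail_le (hg : ∀ c, 0 ≤ g c)
    (hgi : ∀ a b, IntervalIntegrable g volume a b) (hG : ∀ c, G c = ∫ x in cl..c, g x)
    (hG1 : G cu = 1) (hq0 : 0 ≤ q) (hα0 : 0 < α) (hcq : G cq = q) (hcl : cl ≤ cq / α)
    {t : ℝ} (ht : cq / α ≤ t) (htu : t ≤ cu) :
    ∫ u in cq / α..t, q * g u ≤ ∫ u in cl / α..t, α * g (α * u) := by
  have hG_mono := monotone_of_primitive hg hgi hG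
  have hGt : G t ≤ 1 := hG1 ▸ hG_mono htu
  have hGcq : 0 ≤ G (cq / α) := by simpa [hG] using hG_mono hcl
  have hGαt : q ≤ G (α * t) := hcq ▸ hG_mono ((div_le_iff₀' hα0).1 ht)
  rw [intervalIntegral.integral_const_mul, intervalIntegral.integral_const_mul,
    integral_eq_sub_of_primitive hgi hG, ← smul_eq_mul α,
    intervalIntegral.smul_integral_comp_mul_left, integral_eq_sub_of_primitive hgi hG,
    mul_div_cancel₀ _ hα0.ne']
  simp only [hG cl, intervalIntegral.integral_same, sub_zero]
  nlinarith

theorem mul_integral_quantile_tail_le {W : ℝ → ℝ} (hg : ∀ c, 0 ≤ g c)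
    (hgi : ∀ a b, IntervalIntegrable g volume a b) (hG : ∀ c, G c = ∫ x in cl..c, g x)
    (hG1 : G cu = 1) (hq0 : 0 ≤ q) (hα0 : 0 < α) (hcq : G cq = q) (hcql : cl ≤ cq)
    (hcq_div : cq ≤ cq / α) (hcqu : cq / α ≤ cu) (hW : Antitone W) (hW0 : 0 ≤ W) :
    q * ∫ u in cq / α..cu, g u * W u ≤ ∫ u in cl / α..cu, α * g (α * u) * W u := by
  have hf₁ : IntervalIntegrable (fun u => α * g (α * u)) volume (cl / α) cu := by
    simpa [hα0.ne'] using ((hgi cl (α * cu)).comp_mul_left (c := α)).const_mul α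
  rw [← intervalIntegral.integral_const_mul]
  simp only [← mul_assoc]
  exact intervalIntegral_mul_antitone_le_of_primitive_le
    (div_le_div_of_nonneg_right hcql hα0.le) hcqu hf₁ ((hgi _ _).const_mul q)
    (fun u _ => mul_nonneg hα0.le (hg _)) (fun u _ => mul_nonneg hq0 (hg _)) hW hW0
    fun t ht => integral_quantile_tail_le hg hgi hG hG1 hq0 hα0 hcq (hcql.trans hcq_div) ht.1 ht.2

end Quantile

theorem linear_contract_approx_quantile_general
    (n : ℕ) (γ R : Fin (n + 1) → ℝ)
    (hγ0 : γ 0 = 0) (hγ : StrictMono γ) (hR0 : R 0 = 0)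
    (cl cu : ℝ) (hcl : 0 ≤ cl)
    (g G : ℝ → ℝ) (hg : ∀ c, 0 ≤ g c)
    (hgi : ∀ a b : ℝ, IntervalIntegrable g volume a b)
    (hG : ∀ c, G c = ∫ x in cl..c, g x) (hG1 : G cu = 1)
    (q α η : ℝ) (hq0 : 0 < q) (hα0 : 0 < α) (hα1 : α < 1)
    (cq : ℝ) (hcq : G cq = q) (hcql : cl ≤ cq) (hcqu : cq / α ≤ cu)
    (istar : ℝ → ℝ → Fin (n + 1))
    (histar : ∀ t c j, t * R j - γ j * c ≤ t * R (istar t c) - γ (istar t c) * c)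
    (hmeas : ∀ t, Measurable fun c => (istar t c : ℕ))
    -- (c_q/α, η)-small-tail assumption
    (hsmall : η * (∫ c in cl..cu, g c * (R (istar 1 c) - γ (istar 1 c) * c))
        ≤ ∫ c in (cq / α)..cu, g c * (R (istar 1 c) - γ (istar 1 c) * c)) :
    (1 - α) * η * q * (∫ c in cl..cu, g c * (R (istar 1 c) - γ (istar 1 c) * c))
      ≤ ∫ c in cl..cu, g c * ((1 - α) * R (istar α c)) := by
  have hγ_nonneg (j : Fin (n + 1)) : 0 ≤ γ j := hγ0 ▸ hγ.monotone (Fin.zero_le j)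
  set W := fun c => R (istar 1 c) - γ (istar 1 c) * c
  have hW : Antitone W := antitone_optimal_welfare hγ_nonneg fun c j => by
    simpa using histar 1 c j
  have hW0 : 0 ≤ W := fun c => sub_nonneg.2 (by simpa [hR0, hγ0] using histar 1 c 0)
  have hcq_div : cq ≤ cq / α := le_div_self (hcl.trans hcql) hα0 hα1.le
  have hcl_cu : cl ≤ cu := hcql.trans (hcq_div.trans hcqu)
  have hrevenue : ∫ c in cl..cu, g c * W (c / α) ≤ ∫ c in cl..cu, g c * R (istar α c) :=
    intervalIntegral.integral_mono_on hcl_cu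
      ((hW.comp_monotone fun _ _ h => div_le_div_of_nonneg_right h hα0.le).intervalIntegrable_mul
        (hgi cl cu))
      ((hgi cl cu).mul_comp_of_finite R (Fin.measurable_of_measurable_val (hmeas α)))
      fun c hc => mul_le_mul_of_nonneg_left
        (welfare_div_le_reward hα0 (hcl.trans hc.1) (hγ_nonneg _) (histar α c) _) (hg c)
  calc (1 - α) * η * q * (∫ c in cl..cu, g c * W c)
      = (1 - α) * (q * (η * ∫ c in cl..cu, g c * W c)) := by ring
    _ ≤ (1 - α) * (q * ∫ u in cq / α..cu, g u * W u) := by gcongr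
    _ ≤ (1 - α) * ∫ u in cl / α..cu, α * g (α * u) * W u := by
      gcongr
      exact mul_integral_quantile_tail_le hg hgi hG hG1 hq0.le hα0 hcq hcql hcq_div hcqu hW hW0
    _ ≤ (1 - α) * ∫ c in cl..cu, g c * W (c / α) := by
      gcongr
      exact integral_comp_mul_le_integral_comp_div hα0 hα1.le (hcl.trans hcl_cu)
        ((div_le_div_of_nonneg_right hcql hα0.le).trans hcqu) hg (hgi cl cu) hW hW0
    _ ≤ (1 - α) * ∫ c in cl..cu, g c * R (istar α c) := by gcongr
    _ = ∫ c in cl..cu, g c * ((1 - α) * R (istar α c)) := by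
      rw [← intervalIntegral.integral_const_mul]
      congr 1 with c
      ring

/-- Main theorem: if `c_q` is the `q`-quantile of `G` and the instance
satisfies the `(c_q/α, η)`-small-tail assumption, then the linear contract with
parameter `α` earns expected revenue at least `(1-α)·η·q` times the optimal welfare. -/
theorem linear_contract_approx_quantile
    (n : ℕ) (γ R : Fin (n + 1) → ℝ)
    (hγ0 : γ 0 = 0) (hγ : StrictMono γ) (hR0 : R 0 = 0) (hR : StrictMono R)
    (cl cu : ℝ) (hcl : 0 ≤ cl) (hclu : cl < cu)
    (g G : ℝ → ℝ) (hg : ∀ c, 0 ≤ g c)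
    (hgi : ∀ a b : ℝ, IntervalIntegrable g volume a b)
    (hG : ∀ c, G c = ∫ x in cl..c, g x) (hG1 : G cu = 1)
    (q α η : ℝ) (hq0 : 0 < q) (hq1 : q < 1) (hα0 : 0 < α) (hα1 : α < 1)
    (hη0 : 0 < η) (hη1 : η < 1)
    (cq : ℝ) (hcq : G cq = q) (hcql : cl ≤ cq) (hcqu : cq / α ≤ cu)
    (istar : ℝ → ℝ → Fin (n + 1))
    (histar : ∀ t c j, t * R j - γ j * c ≤ t * R (istar t c) - γ (istar t c) * c)
    (hmeas : ∀ t, Measurable fun c => (istar t c : ℕ))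
    -- (c_q/α, η)-small-tail assumption
    (hsmall : η * (∫ c in cl..cu, g c * (R (istar 1 c) - γ (istar 1 c) * c))
        ≤ ∫ c in (cq / α)..cu, g c * (R (istar 1 c) - γ (istar 1 c) * c)) :
    (1 - α) * η * q * (∫ c in cl..cu, g c * (R (istar 1 c) - γ (istar 1 c) * c))
      ≤ ∫ c in cl..cu, g c * ((1 - α) * R (istar α c)) :=
  linear_contract_approx_quantile_general n γ R hγ0 hγ hR0 cl cu hcl g G hg hgi hG hG1 q α η hq0 hα0
    hα1 cq hcq hcql hcqu istar histar hmeas hsmall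
end

section
/- If a distribution G has non-increasing density g on [c̲, ∞) with c̲ ≥ 0, then for every κ > 1 and every c ≥ κ·c̲, G((κ+1)/(2κ) · c) ≥ (1/2)·G(c). That is, G is ((κ+1)/(2κ), 1/2, κc̲)-slowly-increasing. -/
/-!
On an interval where `g` is non-increasing, the mass of `[b, c]` is at most `(c - b) g(b)`,
while the mass of `[a, b]` is at least `(b - a) g(b)`. So if the left interval is at least as long
as the right one, it carries at least as much mass. With `α = (κ + 1) / (2κ)` and `c ≥ κ c̲` one has
`αc - c̲ ≥ c - αc`, hence `G(c) = G(αc) + ∫_{αc}^c g ≤ 2 G(αc)`.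
-/

open MeasureTheory Set

namespace AntitoneOn

variable {g : ℝ → ℝ} {a b c : ℝ}

theorem intervalIntegrable_of_Icc (hab : a ≤ b) (hg : AntitoneOn g (Icc a b)) :
    IntervalIntegrable g volume a b :=
  AntitoneOn.intervalIntegrable (by rwa [uIcc_of_le hab])

theorem integral_le_sub_mul (hbc : b ≤ c) (hg : AntitoneOn g (Icc b c)) :
    ∫ x in b..c, g x ≤ (c - b) * g b := by
  have hle := intervalIntegral.integral_mono_on hbc
    (intervalIntegrable_of_Icc hbc hg) intervalIntegrable_const
    fun x hx => hg ⟨le_rfl, hbc⟩ hx hx.1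
  simpa [intervalIntegral.integral_const, mul_comm] using hle

theorem sub_mul_le_integral (hab : a ≤ b) (hg : AntitoneOn g (Icc a b)) :
    (b - a) * g b ≤ ∫ x in a..b, g x := by
  have hle := intervalIntegral.integral_mono_on hab
    intervalIntegrable_const (intervalIntegrable_of_Icc hab hg)
    fun x hx => hg hx ⟨hab, le_rfl⟩ hx.2
  simpa [intervalIntegral.integral_const, mul_comm] using hle

theorem integral_le_integral_of_sub_le_sub (hab : a ≤ b) (hbc : b ≤ c) (hlen : c - b ≤ b - a)
    (hg : AntitoneOn g (Icc a c)) (hgb : 0 ≤ g b) :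
    ∫ x in b..c, g x ≤ ∫ x in a..b, g x :=
  calc ∫ x in b..c, g x ≤ (c - b) * g b :=
        integral_le_sub_mul hbc (hg.mono (Icc_subset_Icc_left hab))
    _ ≤ (b - a) * g b := mul_le_mul_of_nonneg_right hlen hgb
    _ ≤ ∫ x in a..b, g x := sub_mul_le_integral hab (hg.mono (Icc_subset_Icc_right hbc))

theorem integral_le_two_mul_integral (hab : a ≤ b) (hbc : b ≤ c) (hlen : c - b ≤ b - a)
    (hg : AntitoneOn g (Icc a c)) (hgb : 0 ≤ g b) :
    ∫ x in a..c, g x ≤ 2 * ∫ x in a..b, g x := by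
  rw [← intervalIntegral.integral_add_adjacent_intervals
    (intervalIntegrable_of_Icc hab (hg.mono (Icc_subset_Icc_right hbc)))
    (intervalIntegrable_of_Icc hbc (hg.mono (Icc_subset_Icc_left hab)))]
  linarith [integral_le_integral_of_sub_le_sub hab hbc hlen hg hgb]

end AntitoneOn

theorem nonincreasing_density_slowly_increasing_general
    (cl : ℝ) (hcl : 0 ≤ cl)
    (g G : ℝ → ℝ) (hg : ∀ c, 0 ≤ g c)
    (hmono : AntitoneOn g (Set.Ici cl))
    (hG : ∀ c, G c = ∫ x in cl..c, g x)
    (κ : ℝ) (hκ : 1 < κ) :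
    ∀ c, κ * cl ≤ c → (1 / 2) * G c ≤ G ((κ + 1) / (2 * κ) * c) := by
  intro c hc
  set a := (κ + 1) / (2 * κ) * c
  have hκ0 : 0 < κ := by linarith
  have hc0 : 0 ≤ c := le_trans (by positivity) hc
  have hcl_le : cl ≤ c / κ := by rwa [le_div_iff₀ hκ0, mul_comm]
  have h2a : 2 * a - c = c / κ := by simp only [a]; field_simp; ring
  have hc_le : c / κ ≤ c := div_le_self hc0 hκ.le
  have hbound := AntitoneOn.integral_le_two_mul_integral (a := cl) (b := a) (c := c)
    (by linarith) (by linarith) (by linarith) (hmono.mono Icc_subset_Ici_self) (hg a)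
  rw [hG, hG]
  linarith

/-- a distribution with non-increasing density `g` on `[c̲, ∞)`, `c̲ ≥ 0`,
is `((κ+1)/(2κ), 1/2, κ·c̲)`-slowly-increasing for every `κ > 1`:
`G((κ+1)/(2κ)·c) ≥ (1/2)·G(c)` for all `c ≥ κ·c̲`. -/
theorem nonincreasing_density_slowly_increasing
    (cl : ℝ) (hcl : 0 ≤ cl)
    (g G : ℝ → ℝ) (hg : ∀ c, 0 ≤ g c)
    (hmono : AntitoneOn g (Set.Ici cl))
    (hgi : ∀ a b : ℝ, IntervalIntegrable g volume a b)
    (hG : ∀ c, G c = ∫ x in cl..c, g x)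
    (κ : ℝ) (hκ : 1 < κ) :
    ∀ c, κ * cl ≤ c → (1 / 2) * G c ≤ G ((κ + 1) / (2 * κ) * c) :=
  nonincreasing_density_slowly_increasing_general cl hcl g G hg hmono hG κ hκ
end

section
/- For a truncated normal distribution N(μ, σ²) restricted to [0, ∞), if σ ≥ (5/(2√2))·μ then the virtual cost satisfies φ(c) ≥ (3/2)·c for all c ≥ 0. -/
open MeasureTheory

/-- The Gauss error function. -/
noncomputable def erf (x : ℝ) : ℝ :=
  (2 / Real.sqrt Real.pi) * ∫ t in (0 : ℝ)..x, Real.exp (-t ^ 2)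

/-!
In the standardized variable `x = (c - μ) / (σ √2)` the claim reads
`c / 2 ≤ σ √(π/2) (1 + erf x) e^{x²}`, and it only needs `μ ≤ σ √(π/2)`, which the hypothesis
gives because `4/5 ≤ √π`. For `x ≥ 0` use `erf x ≥ 0` and `e^{x²} ≥ 1 + x² ≥ 1/2 + √2 x`.
For `x ≤ 0` use `e^{x²} ≥ 1` and `erf x ≥ 2x/√π`; the right-hand side is then at least
`σ √(π/2) + (c - μ)`, and `c ≥ 0` keeps the factor `1 + 2x/√π` nonnegative.
-/

open Real

lemma one_le_sqrt_pi : 1 ≤ √π :=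
  one_le_sqrt.mpr (by linarith [pi_gt_three])

lemma erf_nonneg {x : ℝ} (hx : 0 ≤ x) : 0 ≤ erf x :=
  mul_nonneg (by positivity)
    (intervalIntegral.integral_nonneg hx fun t _ => (exp_pos _).le)

lemma two_div_sqrt_pi_mul_le_erf {x : ℝ} (hx : x ≤ 0) : 2 / √π * x ≤ erf x := by
  have hint : ∫ t in x..0, exp (-t ^ 2) ≤ ∫ _ in x..0, (1 : ℝ) :=
    intervalIntegral.integral_mono_on hx
      ((continuous_exp.comp (continuous_pow 2).neg).intervalIntegrable x 0)
      intervalIntegrable_const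
      fun t _ => exp_le_one_iff.mpr (neg_nonpos.mpr (sq_nonneg t))
  have hx_le : x ≤ ∫ t in (0 : ℝ)..x, exp (-t ^ 2) := by
    rw [intervalIntegral.integral_symm]
    simp only [intervalIntegral.integral_const, smul_eq_mul, mul_one] at hint
    linarith
  exact mul_le_mul_of_nonneg_left hx_le (by positivity)

lemma one_add_sq_le_one_add_erf_mul_exp_sq {x : ℝ} (hx : 0 ≤ x) :
    1 + x ^ 2 ≤ (1 + erf x) * exp (x ^ 2) := by
  have h_exp : 1 + x ^ 2 ≤ exp (x ^ 2) := by linarith [add_one_le_exp (x ^ 2)]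
  nlinarith [erf_nonneg hx, exp_pos (x ^ 2)]

lemma one_add_two_div_sqrt_pi_mul_le_one_add_erf_mul_exp_sq {x : ℝ}
    (hx : x ≤ 0) (hx' : -(√π / 2) ≤ x) :
    1 + 2 / √π * x ≤ (1 + erf x) * exp (x ^ 2) := by
  have h_erf := two_div_sqrt_pi_mul_le_erf hx
  have h_lin : 0 ≤ 1 + 2 / √π * x := by
    have : 2 / √π * (-(√π / 2)) = -1 := by field_simp
    nlinarith [mul_le_mul_of_nonneg_left hx' (by positivity : (0 : ℝ) ≤ 2 / √π)]
  calc 1 + 2 / √π * x ≤ 1 + erf x := by linarith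
    _ ≤ (1 + erf x) * exp (x ^ 2) :=
      le_mul_of_one_le_right (by linarith) (one_le_exp (sq_nonneg x))

/-- The theorem in the standardized variable `x = (c - μ) / (σ √2)`, with `m = μ / σ`, so that
`c / σ = m + √2 x`. -/
lemma half_le_sqrt_pi_div_sqrt_two_mul_one_add_erf_mul_exp_sq {m x : ℝ}
    (hm : m ≤ √π / √2) (hc : 0 ≤ m + √2 * x) :
    (m + √2 * x) / 2 ≤ √π / √2 * (1 + erf x) * exp (x ^ 2) := by
  have hs : 0 < √2 := by positivity
  have hs2 : √2 ^ 2 = 2 := sq_sqrt zero_le_two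
  have hm' : m * √2 ≤ √π := (le_div_iff₀ hs).mp hm
  rw [mul_assoc]
  rcases le_total 0 x with hx | hx
  · calc (m + √2 * x) / 2 ≤ √π / √2 * (1 + x ^ 2) := by
          rw [div_mul_eq_mul_div, le_div_iff₀ hs]
          have h_amgm : √2 * x ≤ 1 / 2 + x ^ 2 := by nlinarith [sq_nonneg (√2 * x - 1)]
          nlinarith [mul_le_mul_of_nonneg_left h_amgm (zero_le_one.trans one_le_sqrt_pi),
            mul_le_mul_of_nonneg_left one_le_sqrt_pi (mul_nonneg hs.le hx)]
      _ ≤ _ := mul_le_mul_of_nonneg_left (one_add_sq_le_one_add_erf_mul_exp_sq hx)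
          (by positivity)
  · have hx' : -(√π / 2) ≤ x := by nlinarith [mul_le_mul_of_nonneg_left hc hs.le]
    calc (m + √2 * x) / 2 ≤ √π / √2 + √2 * x := by linarith
      _ = √π / √2 * (1 + 2 / √π * x) := by
          field_simp
          linear_combination x * hs2
      _ ≤ _ := mul_le_mul_of_nonneg_left
          (one_add_two_div_sqrt_pi_mul_le_one_add_erf_mul_exp_sq hx hx') (by positivity)

lemma div_le_sqrt_pi_div_sqrt_two_of_mul_le {μ σ : ℝ} (hσ : 0 < σ)
    (h : 5 / (2 * √2) * μ ≤ σ) : μ / σ ≤ √π / √2 := by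
  rw [div_le_iff₀ hσ]
  calc μ ≤ σ / (5 / (2 * √2)) := (le_div_iff₀' (by positivity)).mpr h
    _ = 4 / 5 / √2 * σ := by
      field_simp
      norm_num
    _ ≤ √π / √2 * σ := by
      gcongr
      linarith [one_le_sqrt_pi]

theorem truncated_normal_virtual_cost_lower_bound_general
    (μ σ : ℝ) (hσ : 0 < σ)
    (h : 5 / (2 * Real.sqrt 2) * μ ≤ σ) :
    ∀ c : ℝ, 0 ≤ c →
      (3 / 2) * c ≤
        c + σ * Real.sqrt Real.pi / Real.sqrt 2 *
          (1 + erf ((c - μ) / (σ * Real.sqrt 2))) *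
          Real.exp ((c - μ) ^ 2 / (2 * σ ^ 2)) := by
  intro c hc
  set x := (c - μ) / (σ * √2) with hx
  have h_sq : (c - μ) ^ 2 / (2 * σ ^ 2) = x ^ 2 := by
    rw [hx, div_pow, mul_pow, sq_sqrt zero_le_two]
    ring
  have h_c : μ / σ + √2 * x = c / σ := by
    rw [hx]
    field_simp
    ring
  have key := half_le_sqrt_pi_div_sqrt_two_mul_one_add_erf_mul_exp_sq
    (div_le_sqrt_pi_div_sqrt_two_of_mul_le hσ h) (h_c ▸ div_nonneg hc hσ.le)
  rw [h_c, div_div, div_le_iff₀' (by positivity)] at key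
  rw [h_sq, mul_div_assoc]
  linarith

/-- for a normal distribution `N(μ, σ²)` truncated at `0`, if
`σ ≥ (5/(2√2))·μ` then the virtual cost
`φ(c) = c + (σ√π/√2)(1 + erf((c-μ)/(σ√2)))·exp((c-μ)²/(2σ²))` satisfies
`φ(c) ≥ (3/2)·c` for all `c ≥ 0`. -/
theorem truncated_normal_virtual_cost_lower_bound
    (μ σ : ℝ) (hσ : 0 < σ) (hμ : 0 ≤ μ)
    (h : 5 / (2 * Real.sqrt 2) * μ ≤ σ) :
    ∀ c : ℝ, 0 ≤ c →
      (3 / 2) * c ≤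
        c + σ * Real.sqrt Real.pi / Real.sqrt 2 *
          (1 + erf ((c - μ) / (σ * Real.sqrt 2))) *
          Real.exp ((c - μ) ^ 2 / (2 * σ ^ 2)) :=
  truncated_normal_virtual_cost_lower_bound_general μ σ hσ h
end

section
/- In the parameterized instance with actions i = 0,...,n, efforts γ₀ = 0, γ_i = δ^{-i} − (i+1) + δi, rewards r_i = δ^{-i} (r₀ = 0), and deterministic outcomes (action i yields reward r_i with probability 1), for an agent of known type c = 1: (a) the minimal linear-contract parameter that incentivizes action i > 1 is α_i = 1 − δ^i, and for action 1 it is α₁ = 1 − 2δ + δ², so any linear contract yields revenue at most 2; (b) the contract paying t_n = γ_n for outcome n (and 0 otherwise) extracts revenue r_n − γ_n = n + 1 − δn. Hence the gap between optimal and best linear contract revenue is at least (n + 1 − δn)/2 = Ω(n). -/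
/-!
Write `β = 1 - α`. For `j ≥ 1` the agent's utility under the linear contract `α` is
`1 + j (1 - δ) - β δ⁻ʲ` (and `0` for `j = 0`), and every comparison between two actions
reduces to the Bernoulli-type bound `1 + k (1 - δ) ≤ δ⁻ᵏ`, valid for all integers `k`.
Comparing action `i` with action `i - 1` forces `β δ⁻ⁱ ≤ 1` when `i ≥ 2`, and comparing action
`1` with action `0` forces `β δ⁻¹ ≤ 2 - δ`; these are exactly the revenues `β rᵢ`, so no linear
contract earns more than `2`. The same bound with `k = j` shows `γⱼ ≥ 0`, so paying `γₙ` on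
outcome `n` makes action `n` optimal and leaves the principal `rₙ - γₙ = n + 1 - δ n`.
-/

theorem one_add_mul_one_sub_le_inv_zpow {δ : ℝ} (hδ : 0 < δ) (k : ℤ) :
    1 + k * (1 - δ) ≤ δ⁻¹ ^ k := by
  obtain ⟨m, rfl | rfl⟩ := Int.eq_nat_or_neg k
  · have hamgm : 1 - δ ≤ δ⁻¹ - 1 := by
      have : δ * δ⁻¹ = 1 := mul_inv_cancel₀ hδ.ne'
      nlinarith [sq_nonneg (δ - 1), inv_pos.2 hδ]
    calc 1 + ((m : ℤ) : ℝ) * (1 - δ) ≤ 1 + m * (δ⁻¹ - 1) := by push_cast; gcongr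
      _ ≤ (1 + (δ⁻¹ - 1)) ^ m := one_add_mul_le_pow (by linarith [inv_pos.2 hδ]) m
      _ = δ⁻¹ ^ (m : ℤ) := by simp
  · calc 1 + ((-m : ℤ) : ℝ) * (1 - δ) = 1 + m * (δ - 1) := by push_cast; ring
      _ ≤ (1 + (δ - 1)) ^ m := one_add_mul_le_pow (by linarith) m
      _ = δ⁻¹ ^ (-(m : ℤ)) := by simp

noncomputable def reward (δ : ℝ) (i : ℕ) : ℝ := if i = 0 then 0 else δ⁻¹ ^ i

noncomputable def effort (δ : ℝ) (i : ℕ) : ℝ := if i = 0 then 0 else δ⁻¹ ^ i - (i + 1) + δ * i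

def Incentivizes (n : ℕ) (r γ : ℕ → ℝ) (α : ℝ) (i : ℕ) : Prop :=
  ∀ j ≤ n, α * r j - γ j ≤ α * r i - γ i

section Instance

variable {n i : ℕ} {δ α : ℝ}

theorem utility_zero : α * reward δ 0 - effort δ 0 = 0 := by
  simp [reward, effort]

theorem utility_of_ne_zero {j : ℕ} (hj : j ≠ 0) :
    α * reward δ j - effort δ j = 1 + j * (1 - δ) - (1 - α) * δ⁻¹ ^ j := by
  simp only [reward, effort, hj, if_false]
  ring

theorem effort_nonneg (hδ : 0 < δ) (j : ℕ) : 0 ≤ effort δ j := by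
  rcases eq_or_ne j 0 with rfl | hj
  · simp [effort]
  · have := one_add_mul_one_sub_le_inv_zpow hδ j
    simp only [effort, hj, if_false, zpow_natCast, Int.cast_natCast] at this ⊢
    linarith

theorem reward_sub_effort (hn : n ≠ 0) : reward δ n - effort δ n = n + 1 - δ * n := by
  simp only [reward, effort, hn, if_false]
  ring

theorem incentivizes_one_sub_pow (hδ0 : 0 < δ) (hδ1 : δ ≤ 1) (hi : i ≠ 0) :
    Incentivizes n (reward δ) (effort δ) (1 - δ ^ i) i := by
  intro j _
  have hcancel : δ ^ i * δ⁻¹ ^ i = 1 := by rw [← mul_pow, mul_inv_cancel₀ hδ0.ne', one_pow]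
  rw [utility_of_ne_zero hi, sub_sub_cancel, hcancel]
  rcases eq_or_ne j 0 with rfl | hj
  · rw [utility_zero]
    exact (by positivity : (0 : ℝ) ≤ i * (1 - δ)).trans_eq (by ring)
  · have hshift : δ ^ i * δ⁻¹ ^ j = δ⁻¹ ^ ((j : ℤ) - i) := by
      rw [zpow_sub₀ (inv_ne_zero hδ0.ne'), zpow_natCast, zpow_natCast, inv_pow, inv_pow]
      field_simp
    have := one_add_mul_one_sub_le_inv_zpow hδ0 ((j : ℤ) - i)
    rw [utility_of_ne_zero hj, sub_sub_cancel, hshift]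
    push_cast at this
    linarith

theorem incentivizes_one_sub_two_mul_add_sq (hδ0 : 0 < δ) (hδ2 : δ ≤ 2) :
    Incentivizes n (reward δ) (effort δ) (1 - 2 * δ + δ ^ 2) 1 := by
  have hβ : 1 - (1 - 2 * δ + δ ^ 2) = δ * (2 - δ) := by ring
  have hδinv : δ * δ⁻¹ = 1 := mul_inv_cancel₀ hδ0.ne'
  intro j _
  rw [utility_of_ne_zero one_ne_zero, hβ]
  rcases j with _ | m
  · rw [utility_zero]
    linear_combination (2 - δ) * hδinv
  · have hbern := one_add_mul_one_sub_le_inv_zpow hδ0 m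
    simp only [zpow_natCast, Int.cast_natCast] at hbern
    have hscaled : 1 + (m + 1) * (1 - δ) ≤ (2 - δ) * δ⁻¹ ^ m := by
      nlinarith [mul_le_mul_of_nonneg_left hbern (by linarith : (0 : ℝ) ≤ 2 - δ),
        mul_nonneg (Nat.cast_nonneg (α := ℝ) m) (sq_nonneg (1 - δ))]
    rw [utility_of_ne_zero m.succ_ne_zero, hβ, pow_succ', pow_one]
    push_cast
    linear_combination hscaled + (2 - δ) * (1 - δ⁻¹ ^ m) * hδinv

theorem Incentivizes.one_sub_mul_inv_pow_le_one (hδ0 : 0 < δ) (hδ1 : δ < 1) (hi : 2 ≤ i)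
    (hin : i ≤ n) (h : Incentivizes n (reward δ) (effort δ) α i) :
    (1 - α) * δ⁻¹ ^ i ≤ 1 := by
  obtain ⟨k, rfl⟩ : ∃ k, i = k + 1 := ⟨i - 1, by omega⟩
  have hprev := h k (by omega)
  rw [utility_of_ne_zero (by omega), utility_of_ne_zero (by omega)] at hprev
  have hpow : δ⁻¹ ^ k = δ * δ⁻¹ ^ (k + 1) := by
    rw [pow_succ, mul_comm δ, mul_assoc, inv_mul_cancel₀ hδ0.ne', mul_one]
  rw [hpow] at hprev
  push_cast at hprev
  have hkey : (1 - δ) * ((1 - α) * δ⁻¹ ^ (k + 1) - 1) ≤ (1 - δ) * 0 := by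
    linear_combination hprev
  linarith [le_of_mul_le_mul_left hkey (by linarith)]

theorem Incentivizes.one_sub_mul_inv_le (h : Incentivizes n (reward δ) (effort δ) α 1) :
    (1 - α) * δ⁻¹ ≤ 2 - δ := by
  have := h 0 (Nat.zero_le n)
  rw [utility_zero, utility_of_ne_zero one_ne_zero] at this
  push_cast at this
  linarith [pow_one δ⁻¹]

theorem Incentivizes.one_sub_pow_le (hδ0 : 0 < δ) (hδ1 : δ < 1) (hi : 2 ≤ i) (hin : i ≤ n)
    (h : Incentivizes n (reward δ) (effort δ) α i) : 1 - δ ^ i ≤ α := by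
  have := h.one_sub_mul_inv_pow_le_one hδ0 hδ1 hi hin
  rw [inv_pow, ← div_eq_mul_inv, div_le_one (by positivity)] at this
  linarith

theorem Incentivizes.one_sub_two_mul_add_sq_le (hδ0 : 0 < δ)
    (h : Incentivizes n (reward δ) (effort δ) α 1) : 1 - 2 * δ + δ ^ 2 ≤ α := by
  have := h.one_sub_mul_inv_le
  rw [← div_eq_mul_inv, div_le_iff₀ hδ0] at this
  nlinarith

theorem Incentivizes.revenue_le_two (hδ0 : 0 < δ) (hδ1 : δ < 1) (hin : i ≤ n)
    (h : Incentivizes n (reward δ) (effort δ) α i) : (1 - α) * reward δ i ≤ 2 := by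
  rcases i with _ | _ | k
  · simp [reward]
  · simpa [reward] using h.one_sub_mul_inv_le.trans (by linarith : 2 - δ ≤ 2)
  · simpa [reward] using (h.one_sub_mul_inv_pow_le_one hδ0 hδ1 (by omega) hin).trans one_le_two

end Instance

/-- in the parameterized instance with `γ_0 = 0`, `γ_i = δ^{-i} - (i+1) + δi`,
`r_0 = 0`, `r_i = δ^{-i}` and deterministic outcomes, for an agent of known type `c = 1`:
(a) the minimal linear parameter incentivizing action `i > 1` is `1 - δ^i`, and for
action `1` it is `1 - 2δ + δ²`, so any linear contract yields revenue at most `2`;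
(b) the contract paying `γ_n` on outcome `n` incentivizes action `n` and extracts revenue
`r_n - γ_n = n + 1 - δn`; hence the ratio of optimal to linear revenue is at least
`(n + 1 - δn)/2 = Ω(n)`. -/
theorem point_mass_linear_gap
    (n : ℕ) (hn : 1 ≤ n) (δ : ℝ) (hδ0 : 0 < δ) (hδ1 : δ < 1)
    (γ r : ℕ → ℝ) (hγ0 : γ 0 = 0) (hr0 : r 0 = 0)
    (hγ : ∀ i : ℕ, 1 ≤ i → γ i = (1 / δ) ^ i - ((i : ℝ) + 1) + δ * i)
    (hr : ∀ i : ℕ, 1 ≤ i → r i = (1 / δ) ^ i) :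
    -- (a) minimal linear parameters incentivizing each action for type c = 1
    (∀ i : ℕ, 2 ≤ i → i ≤ n →
        IsLeast {α : ℝ | ∀ j ≤ n, α * r j - γ j ≤ α * r i - γ i} (1 - δ ^ i)) ∧
    IsLeast {α : ℝ | ∀ j ≤ n, α * r j - γ j ≤ α * r 1 - γ 1} (1 - 2 * δ + δ ^ 2) ∧
    -- any linear contract yields revenue at most 2
    (∀ (α : ℝ) (i : ℕ), i ≤ n → 0 ≤ α →
        (∀ j ≤ n, α * r j - γ j ≤ α * r i - γ i) → (1 - α) * r i ≤ 2) ∧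
    -- (b) paying t_n = γ_n on outcome n incentivizes action n ...
    (∀ j ≤ n, (if j = n then γ n else 0) - γ j ≤ γ n - γ n) ∧
    -- ... and extracts revenue r_n - γ_n = n + 1 - δ n
    r n - γ n = (n : ℝ) + 1 - δ * n ∧
    -- hence the multiplicative gap is at least (n + 1 - δ n)/2
    (∀ (α : ℝ) (i : ℕ), i ≤ n → 0 ≤ α →
        (∀ j ≤ n, α * r j - γ j ≤ α * r i - γ i) →
        ((n : ℝ) + 1 - δ * n) / 2 * ((1 - α) * r i) ≤ r n - γ n) := by
  obtain rfl : r = reward δ := funext fun i => by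
    rcases Nat.eq_zero_or_pos i with rfl | hi
    · simp [reward, hr0]
    · simp [reward, hr i hi, hi.ne']
  obtain rfl : γ = effort δ := funext fun i => by
    rcases Nat.eq_zero_or_pos i with rfl | hi
    · simp [effort, hγ0]
    · simp [effort, hγ i hi, hi.ne']
  have hnet := reward_sub_effort (δ := δ) (n := n) (by omega)
  refine ⟨fun i hi hin => ⟨incentivizes_one_sub_pow hδ0 hδ1.le (by omega),
      fun α h => Incentivizes.one_sub_pow_le hδ0 hδ1 hi hin h⟩,
    ⟨incentivizes_one_sub_two_mul_add_sq hδ0 (by linarith),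
      fun α h => Incentivizes.one_sub_two_mul_add_sq_le hδ0 h⟩,
    fun α i hin _ h => Incentivizes.revenue_le_two hδ0 hδ1 hin h, ?_, hnet, ?_⟩
  · intro j _
    split_ifs with hj
    · simp [hj]
    · simpa using effort_nonneg hδ0 j
  · intro α i hin _ h
    have hgain : 0 ≤ (n : ℝ) + 1 - δ * n := by nlinarith [(Nat.cast_nonneg n : (0 : ℝ) ≤ n)]
    calc ((n : ℝ) + 1 - δ * n) / 2 * ((1 - α) * reward δ i)
        ≤ ((n : ℝ) + 1 - δ * n) / 2 * 2 := by
          gcongr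
          exact Incentivizes.revenue_le_two hδ0 hδ1 hin h
      _ = reward δ n - effort δ n := by rw [hnet]; ring
end

section
/- (Likelihood-ratio payment concentration) Suppose outcome j_i maximizes the likelihood ratio F_{i,j}/F_{i',j} over outcomes j, for every other action i'. Given any payment vector t ≥ 0 intended for action i, define t̂ by t̂_{j_i} = (1/F_{i,j_i})·Σ_j t_j F_{i,j} and t̂_j = 0 for j ≠ j_i. Then the expected payment to an agent choosing action i is unchanged (Σ_j t̂_j F_{i,j} = Σ_j t_j F_{i,j}), while for every other action i', the expected payment weakly decreases (Σ_j t̂_j F_{i',j} ≤ Σ_j t_j F_{i',j}). Consequently, if action i was incentive compatible under t, it remains so under t̂. -/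
/-!
Concentrating payments on the outcome `j₀` with the largest likelihood ratio is a dot-product
inequality: the likelihood-ratio condition says `q j₀ • p ≤ p j₀ • q` pointwise, and pairing with
`t ≥ 0` gives `(t ⬝ᵥ p) * q j₀ ≤ p j₀ * (t ⬝ᵥ q)`. The concentrated payment `(t ⬝ᵥ p) / p j₀` at
`j₀` therefore costs action `p` exactly `t ⬝ᵥ p` and any other action `q` at most `t ⬝ᵥ q`; so the
utility of the intended action is unchanged and that of every deviation can only drop.
-/

open Matrix

section

variable {Ω K : Type*} [Fintype Ω] [DecidableEq Ω]

theorem single_div_dotProduct_self [Field K] (t p : Ω → K) {j₀ : Ω} (hp : p j₀ ≠ 0) :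
    Pi.single j₀ ((t ⬝ᵥ p) / p j₀) ⬝ᵥ p = t ⬝ᵥ p := by
  rw [single_dotProduct, div_mul_cancel₀ _ hp]

theorem single_div_dotProduct_le [Field K] [LinearOrder K] [IsStrictOrderedRing K]
    {t p q : Ω → K} {j₀ : Ω} (ht : 0 ≤ t) (hp : 0 < p j₀) (hLR : ∀ j, q j₀ * p j ≤ p j₀ * q j) :
    Pi.single j₀ ((t ⬝ᵥ p) / p j₀) ⬝ᵥ q ≤ t ⬝ᵥ q := by
  rw [single_dotProduct, div_mul_eq_mul_div, div_le_iff₀ hp, mul_comm, mul_comm _ (p j₀),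
    ← smul_eq_mul, ← smul_eq_mul (a := p j₀), ← dotProduct_smul, ← dotProduct_smul]
  exact dotProduct_le_dotProduct_of_nonneg_left hLR ht

end

theorem incentive_compatible_of_payment_le {α M : Type*} [AddCommGroup M] [PartialOrder M]
    [IsOrderedAddMonoid M] {pay pay' cost : α → M} {i : α}
    (h_eq : pay' i = pay i) (h_le : ∀ i', i' ≠ i → pay' i' ≤ pay i')
    (hIC : ∀ i', pay i' - cost i' ≤ pay i - cost i) :
    ∀ i', pay' i' - cost i' ≤ pay' i - cost i := by
  intro i'
  rcases eq_or_ne i' i with rfl | hi'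
  · exact le_rfl
  · rw [h_eq]
    exact (sub_le_sub_right (h_le i' hi') _).trans (hIC i')

theorem likelihood_ratio_payment_concentration_general
    (na m : ℕ) (F : Fin (na + 1) → Fin (m + 1) → ℝ)
    (i : Fin (na + 1)) (ji : Fin (m + 1)) (hji : 0 < F i ji)
    -- likelihood-ratio-maximizing property of outcome j_i
    (hLR : ∀ i', i' ≠ i → ∀ j, F i' ji * F i j ≤ F i ji * F i' j)
    (t : Fin (m + 1) → ℝ) (ht : ∀ j, 0 ≤ t j)
    (that : Fin (m + 1) → ℝ)
    (hthat : ∀ j, that j = if j = ji then (∑ k, t k * F i k) / F i ji else 0) :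
    (∑ j, that j * F i j = ∑ j, t j * F i j) ∧
    (∀ i', i' ≠ i → ∑ j, that j * F i' j ≤ ∑ j, t j * F i' j) ∧
    (∀ (γ : Fin (na + 1) → ℝ) (c : ℝ),
      (∀ i', (∑ j, t j * F i' j) - γ i' * c ≤ (∑ j, t j * F i j) - γ i * c) →
      (∀ i', (∑ j, that j * F i' j) - γ i' * c ≤ (∑ j, that j * F i j) - γ i * c)) := by
  -- The sums `∑ j, v j * w j` in the statement unfold to `v ⬝ᵥ w`.
  obtain rfl : that = Pi.single ji ((t ⬝ᵥ F i) / F i ji) := by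
    funext j
    rw [hthat, Pi.single_apply]
    rfl
  have h_eq : Pi.single ji ((t ⬝ᵥ F i) / F i ji) ⬝ᵥ F i = t ⬝ᵥ F i :=
    single_div_dotProduct_self t (F i) hji.ne'
  have h_le : ∀ i', i' ≠ i → Pi.single ji ((t ⬝ᵥ F i) / F i ji) ⬝ᵥ F i' ≤ t ⬝ᵥ F i' :=
    fun i' hi' => single_div_dotProduct_le ht hji (hLR i' hi')
  exact ⟨h_eq, h_le, fun γ c hIC =>
    incentive_compatible_of_payment_le
      (pay := fun k => t ⬝ᵥ F k) (cost := fun k => γ k * c) h_eq h_le hIC⟩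

/-- likelihood-ratio payment concentration: if outcome `j_i` maximizes
the likelihood ratio of action `i` against every other action, then concentrating the
payments `t` on outcome `j_i` (preserving the expected payment for action `i`) leaves
the expected payment for action `i` unchanged, weakly decreases it for every other
action, and preserves incentive compatibility of action `i`. -/
theorem likelihood_ratio_payment_concentration
    (na m : ℕ) (F : Fin (na + 1) → Fin (m + 1) → ℝ)
    (hF : ∀ i j, 0 ≤ F i j)
    (i : Fin (na + 1)) (ji : Fin (m + 1)) (hji : 0 < F i ji)
    -- likelihood-ratio-maximizing property of outcome j_i
    (hLR : ∀ i', i' ≠ i → ∀ j, F i' ji * F i j ≤ F i ji * F i' j)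
    (t : Fin (m + 1) → ℝ) (ht : ∀ j, 0 ≤ t j)
    (that : Fin (m + 1) → ℝ)
    (hthat : ∀ j, that j = if j = ji then (∑ k, t k * F i k) / F i ji else 0) :
    (∑ j, that j * F i j = ∑ j, t j * F i j) ∧
    (∀ i', i' ≠ i → ∑ j, that j * F i' j ≤ ∑ j, t j * F i' j) ∧
    (∀ (γ : Fin (na + 1) → ℝ) (c : ℝ),
      (∀ i', (∑ j, t j * F i' j) - γ i' * c ≤ (∑ j, t j * F i j) - γ i * c) →
      (∀ i', (∑ j, that j * F i' j) - γ i' * c ≤ (∑ j, that j * F i j) - γ i * c)) :=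
  likelihood_ratio_payment_concentration_general na m F i ji hji hLR t ht that hthat
end
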